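/- arXiv:math-ph/0407011 — 2 statements merged into one kernel-verified Lean document; each statement's English description precedes it below -/
import Mathlib

section
/- Let n ≥ 3 and 2 ≤ j ≤ n−1. For all real numbers s and t one has the matrix identity exp(s·K₀ⱼ) · exp(t·K₀₁) · exp(−s·K₀ⱼ) = exp(t·(cosh(s)·K₀₁ − sinh(s)·K₁ⱼ)). (Matrix form of the anti–de Sitter group relation e^{isM₀ⱼ} e^{itM₀₁} e^{−isM₀ⱼ} = e^{it(cosh(s)M₀₁ − sinh(s)M₁ⱼ)}.) -/
/-!
Write `X = K₀ⱼ` and `Y = K₀₁`. Since `X³ = X`, the exponential series collapses to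
`exp (s X) = 1 + (cosh s - 1) X² + sinh s X`. Together with `X Y X = 0` and `X² Y + Y X² = Y`
this gives `exp (s X) Y exp (-s X) = cosh s Y + sinh s [X, Y]`, and `[X, Y] = -K₁ⱼ`. The relation
follows because conjugation by the unit `exp (s X)` commutes with `exp`.
-/

open Matrix NormedSpace Real

/-- The matrix unit `E_{μν}`: the `(n+1)×(n+1)` real matrix with `1` in entry `(μ,ν)`
and `0` elsewhere. -/
noncomputable def E (n : ℕ) (μ ν : Fin (n + 1)) : Matrix (Fin (n + 1)) (Fin (n + 1)) ℝ :=
  Matrix.single μ ν 1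

/-- `K₀₁ = E₀₁ + E₁₀`, generator of the boost in the 0–1–plane. -/
noncomputable def K01 (n : ℕ) : Matrix (Fin (n + 1)) (Fin (n + 1)) ℝ := E n 0 1 + E n 1 0

/-- `K₀ₙ = E₀ₙ − Eₙ₀`, generator of the rotation in the 0–n–plane. -/
noncomputable def K0n (n : ℕ) : Matrix (Fin (n + 1)) (Fin (n + 1)) ℝ :=
  E n 0 (Fin.last n) - E n (Fin.last n) 0

/-- `K₁ₙ = E₁ₙ + Eₙ₁`, generator of the boost in the 1–n–plane. -/
noncomputable def K1n (n : ℕ) : Matrix (Fin (n + 1)) (Fin (n + 1)) ℝ :=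
  E n 1 (Fin.last n) + E n (Fin.last n) 1

/-- `K₀ⱼ = E₀ⱼ + Eⱼ₀`, generator of the boost in the 0–j–plane. -/
noncomputable def K0 (n : ℕ) (j : Fin (n + 1)) : Matrix (Fin (n + 1)) (Fin (n + 1)) ℝ :=
  E n 0 j + E n j 0

/-- `K₁ⱼ = E₁ⱼ − Eⱼ₁`, generator of the rotation in the 1–j–plane. -/
noncomputable def K1 (n : ℕ) (j : Fin (n + 1)) : Matrix (Fin (n + 1)) (Fin (n + 1)) ℝ :=
  E n 1 j - E n j 1

theorem pow_two_mul_add_one_of_pow_three_eq_self {M : Type*} [Monoid M] {x : M}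
    (h : x ^ 3 = x) (k : ℕ) : x ^ (2 * k + 1) = x := by
  induction k with
  | zero => simp
  | succ k ih => rw [show 2 * (k + 1) + 1 = 2 * k + 1 + 2 by ring, pow_add, ih, ← pow_succ', h]

theorem pow_two_mul_add_two_of_pow_three_eq_self {M : Type*} [Monoid M] {x : M}
    (h : x ^ 3 = x) (k : ℕ) : x ^ (2 * (k + 1)) = x ^ 2 := by
  rw [mul_add, mul_one, pow_succ, pow_two_mul_add_one_of_pow_three_eq_self h, sq]

section TopologicalAlgebra

variable {A : Type*} [Ring A] [Algebra ℝ A] [TopologicalSpace A] [IsTopologicalRing A]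
  [ContinuousSMul ℝ A] [T2Space A]

theorem exp_smul_of_pow_three_eq_self {X : A} (hX : X ^ 3 = X) (s : ℝ) :
    exp (s • X) = 1 + (cosh s - 1) • X ^ 2 + sinh s • X := by
  rw [exp_eq_tsum ℝ]
  refine HasSum.tsum_eq ?_
  simp_rw [smul_pow, smul_smul, inv_mul_eq_div]
  have hcoshTail : HasSum (fun k : ℕ => s ^ (2 * (k + 1)) / (2 * (k + 1)).factorial)
      (cosh s - 1) := by
    have h := (hasSum_nat_add_iff' 1).2 (Real.hasSum_cosh s)
    rwa [Finset.sum_range_one, mul_zero, pow_zero, Nat.factorial_zero, Nat.cast_one,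
      div_one] at h
  have hevenTail : HasSum (fun k : ℕ => (s ^ (2 * (k + 1)) / (2 * (k + 1)).factorial) •
      X ^ (2 * (k + 1))) ((cosh s - 1) • X ^ 2) := by
    convert hcoshTail.smul_const (X ^ 2) using 2 with k
    rw [pow_two_mul_add_two_of_pow_three_eq_self hX]
  have heven : HasSum (fun k : ℕ => (s ^ (2 * k) / (2 * k).factorial) • X ^ (2 * k))
      ((cosh s - 1) • X ^ 2 + 1) := by
    have h := (hasSum_nat_add_iff (f := fun k : ℕ => (s ^ (2 * k) / (2 * k).factorial) •
      X ^ (2 * k)) 1).1 hevenTail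
    rwa [Finset.sum_range_one, mul_zero, pow_zero, pow_zero, Nat.factorial_zero, Nat.cast_one,
      div_one, one_smul] at h
  have hodd : HasSum (fun k : ℕ => (s ^ (2 * k + 1) / (2 * k + 1).factorial) • X ^ (2 * k + 1))
      (sinh s • X) := by
    convert (Real.hasSum_sinh s).smul_const X using 2 with k
    rw [pow_two_mul_add_one_of_pow_three_eq_self hX]
  convert HasSum.even_add_odd (f := fun n : ℕ => (s ^ n / n.factorial) • X ^ n) heven hodd
    using 1
  abel

theorem exp_smul_mul_mul_exp_neg_smul {X Y : A} (hX : X ^ 3 = X) (hXYX : X * Y * X = 0)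
    (hY : X ^ 2 * Y + Y * X ^ 2 = Y) (s : ℝ) :
    exp (s • X) * Y * exp ((-s) • X) = cosh s • Y + sinh s • (X * Y - Y * X) := by
  have hXYX2 : X * Y * X ^ 2 = X * Y * X * X := by noncomm_ring
  have hX2YX : X ^ 2 * Y * X = X * (X * Y * X) := by noncomm_ring
  have hX2YX2 : X ^ 2 * Y * X ^ 2 = X * (X * Y * X) * X := by noncomm_ring
  rw [exp_smul_of_pow_three_eq_self hX, exp_smul_of_pow_three_eq_self hX, cosh_neg, sinh_neg]
  simp only [add_mul, mul_add, smul_mul_assoc, mul_smul_comm, one_mul, mul_one, hXYX2, hX2YX,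
    hX2YX2, hXYX, mul_zero, zero_mul, smul_zero, add_zero]
  linear_combination (norm := module) (cosh s - 1) • hY

end TopologicalAlgebra

theorem E_mul_E (n : ℕ) (a b c d : Fin (n + 1)) :
    E n a b * E n c d = if b = c then E n a d else 0 := by
  split_ifs with h
  · subst h; simp [E]
  · exact Matrix.single_mul_single_of_ne 1 a b c h 1

section Generators

variable {n : ℕ} {j : Fin (n + 1)}

theorem K0_pow_three (hj0 : j ≠ 0) : K0 n j ^ 3 = K0 n j := by
  simp only [K0, pow_succ, pow_zero, one_mul, add_mul, mul_add, E_mul_E, hj0, hj0.symm,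
    if_true, if_false, add_zero, zero_add]

theorem K0_mul_K01_mul_K0 (h01 : (0 : Fin (n + 1)) ≠ 1) (hj0 : j ≠ 0) (hj1 : j ≠ 1) :
    K0 n j * K01 n * K0 n j = 0 := by
  simp [K0, K01, add_mul, mul_add, E_mul_E, hj0, hj1, hj1.symm, h01, h01.symm]

theorem K0_sq_mul_K01_add_K01_mul_K0_sq (h01 : (0 : Fin (n + 1)) ≠ 1) (hj0 : j ≠ 0)
    (hj1 : j ≠ 1) : K0 n j ^ 2 * K01 n + K01 n * K0 n j ^ 2 = K01 n := by
  simp [K0, K01, sq, add_mul, mul_add, E_mul_E, hj0, hj0.symm, hj1, hj1.symm, h01, h01.symm]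

theorem K0_mul_K01_sub_K01_mul_K0 (h01 : (0 : Fin (n + 1)) ≠ 1) (hj0 : j ≠ 0) (hj1 : j ≠ 1) :
    K0 n j * K01 n - K01 n * K0 n j = -K1 n j := by
  simp [K0, K01, K1, add_mul, mul_add, E_mul_E, hj0, hj0.symm, hj1, hj1.symm, h01, h01.symm]

end Generators

theorem ads_relation_0j_01_general (n : ℕ) (j : Fin (n + 1))
    (hj2 : 2 ≤ (j : ℕ)) (s t : ℝ) :
    exp (s • K0 n j) * exp (t • K01 n) * exp ((-s) • K0 n j) =
      exp (t • (Real.cosh s • K01 n - Real.sinh s • K1 n j)) := by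
  have hval1 : ((1 : Fin (n + 1)) : ℕ) = 1 := by
    rw [Fin.val_one', Nat.mod_eq_of_lt (by omega)]
  have h01 : (0 : Fin (n + 1)) ≠ 1 := Fin.ne_of_val_ne (by rw [Fin.val_zero, hval1]; omega)
  have hj0 : j ≠ 0 := Fin.ne_of_val_ne (by rw [Fin.val_zero]; omega)
  have hj1 : j ≠ 1 := Fin.ne_of_val_ne (by rw [hval1]; omega)
  have hinv : exp ((-s) • K0 n j) = (exp (s • K0 n j))⁻¹ := by rw [neg_smul, Matrix.exp_neg]
  rw [hinv, ← Matrix.exp_conj _ _ (Matrix.isUnit_exp _), ← hinv, mul_smul_comm, smul_mul_assoc,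
    exp_smul_mul_mul_exp_neg_smul (K0_pow_three hj0) (K0_mul_K01_mul_K0 h01 hj0 hj1)
      (K0_sq_mul_K01_add_K01_mul_K0_sq h01 hj0 hj1),
    K0_mul_K01_sub_K01_mul_K0 h01 hj0 hj1, smul_neg, ← sub_eq_add_neg]

/-- The AdS group relation `e^{sK₀ⱼ} e^{tK₀₁} e^{−sK₀ⱼ} = e^{t(cosh(s)K₀₁ − sinh(s)K₁ⱼ)}`
for `2 ≤ j ≤ n − 1`. -/
theorem ads_relation_0j_01 (n : ℕ) (hn : 3 ≤ n) (j : Fin (n + 1))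
    (hj2 : 2 ≤ (j : ℕ)) (hj : (j : ℕ) ≤ n - 1) (s t : ℝ) :
    exp (s • K0 n j) * exp (t • K01 n) * exp ((-s) • K0 n j) =
      exp (t • (Real.cosh s • K01 n - Real.sinh s • K1 n j)) :=
  ads_relation_0j_01_general n j hj2 s t
end

section
/- Partition-function bound under cubic multiplicity growth: let (μ_m)_{m≥1} be real numbers with 0 ≤ μ_m ≤ 2m³ for all m ≥ 1. Then for every γ > 0 the series ∑_{m=1}^∞ μ_m · (−log(1 − e^{−γm})) converges, and ∑_{m=1}^∞ μ_m · (−log(1 − e^{−γm})) ≤ 12·e^{−γ}/(1 − e^{−γ})⁵ ≤ 12·5⁵/γ⁵. (Equivalently, log tr e^{−γH} ≤ 12·5⁵/γ⁵ for the second-quantized bosonic Hamiltonian H built from a one-particle Hamiltonian with eigenvalues m ∈ ℕ of multiplicity μ_m ≤ 2m³.) -/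
/-!
Write `q = e^{-γ}`. The elementary bound `-log (1 - x) ≤ x / (1 - x)` gives
`-log (1 - q^(m+1)) ≤ q^(m+1) / (1 - q)`, and `2 (m+1)³ ≤ 12 (m+3 choose 3)`, so the series is
dominated termwise by `12 q / (1 - q) · (m+3 choose 3) q^m`, whose sum is `12 q / (1 - q)⁵`.
For the last inequality, `x e^{-x} ≤ 1 - e^{-x}` at `x = γ/5` together with `e^{-γ/5} ≥ e^{-γ}`
gives `(γ/5)⁵ e^{-γ} ≤ (1 - e^{-γ})⁵`.
-/

open Real
open scoped Nat

lemma Nat.succ_pow_le_factorial_mul_choose (m k : ℕ) :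
    (m + 1) ^ k ≤ k ! * (m + k).choose k := by
  have h := Nat.pow_sub_le_descFactorial (m + k) k
  rwa [show m + k + 1 - k = m + 1 by omega, Nat.descFactorial_eq_factorial_mul_choose] at h

namespace Real

lemma neg_log_one_sub_le_div {x : ℝ} (hx : x < 1) : -log (1 - x) ≤ x / (1 - x) := by
  have h : 0 < 1 - x := by linarith
  calc -log (1 - x) = log (1 - x)⁻¹ := (log_inv _).symm
    _ ≤ (1 - x)⁻¹ - 1 := log_le_sub_one_of_pos (inv_pos.2 h)
    _ = x / (1 - x) := by field_simp; ring

lemma neg_log_one_sub_nonneg {x : ℝ} (hx0 : 0 ≤ x) (hx1 : x < 1) : 0 ≤ -log (1 - x) :=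
  neg_nonneg.2 (log_nonpos (by linarith) (by linarith))

lemma neg_log_one_sub_pow_succ_le {q : ℝ} (hq0 : 0 ≤ q) (hq1 : q < 1) (m : ℕ) :
    -log (1 - q ^ (m + 1)) ≤ q ^ (m + 1) / (1 - q) := by
  have hpow : q ^ (m + 1) ≤ q := pow_le_of_le_one hq0 hq1.le (by omega)
  calc -log (1 - q ^ (m + 1)) ≤ q ^ (m + 1) / (1 - q ^ (m + 1)) :=
        neg_log_one_sub_le_div (by linarith)
    _ ≤ q ^ (m + 1) / (1 - q) :=
        div_le_div_of_nonneg_left (by positivity) (by linarith) (by linarith)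

lemma mul_neg_log_one_sub_pow_succ_le {a c q : ℝ} {k m : ℕ} (ha0 : 0 ≤ a)
    (ha : a ≤ c * ((m : ℝ) + 1) ^ k) (hq0 : 0 ≤ q) (hq1 : q < 1) :
    a * -log (1 - q ^ (m + 1)) ≤ c * k ! * q / (1 - q) * ((m + k).choose k * q ^ m) := by
  have hc : 0 ≤ c := nonneg_of_mul_nonneg_left (ha0.trans ha) (by positivity)
  have hchoose : ((m : ℝ) + 1) ^ k ≤ k ! * (m + k).choose k := by
    exact_mod_cast Nat.succ_pow_le_factorial_mul_choose m k
  have h1q : 0 < 1 - q := by linarith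
  calc a * -log (1 - q ^ (m + 1)) ≤ a * (q ^ (m + 1) / (1 - q)) :=
        mul_le_mul_of_nonneg_left (neg_log_one_sub_pow_succ_le hq0 hq1 m) ha0
    _ ≤ c * ((m : ℝ) + 1) ^ k * (q ^ (m + 1) / (1 - q)) :=
        mul_le_mul_of_nonneg_right ha (by positivity)
    _ ≤ c * (k ! * (m + k).choose k) * (q ^ (m + 1) / (1 - q)) := by gcongr
    _ = c * k ! * q / (1 - q) * ((m + k).choose k * q ^ m) := by
        rw [pow_succ]; field_simp

section PolynomialMultiplicity

variable {a : ℕ → ℝ} {c q : ℝ} {k : ℕ}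

lemma summable_choose_mul_geometric_bound (hq0 : 0 ≤ q) (hq1 : q < 1) :
    Summable fun m : ℕ ↦ c * k ! * q / (1 - q) * ((m + k).choose k * q ^ m) :=
  (summable_choose_mul_geometric_of_norm_lt_one (R := ℝ) k
    (by rwa [norm_of_nonneg hq0])).mul_left _

lemma summable_mul_neg_log_one_sub_pow_succ
    (ha : ∀ m : ℕ, 0 ≤ a m ∧ a m ≤ c * ((m : ℝ) + 1) ^ k) (hq0 : 0 ≤ q) (hq1 : q < 1) :
    Summable fun m : ℕ ↦ a m * -log (1 - q ^ (m + 1)) :=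
  (summable_choose_mul_geometric_bound hq0 hq1).of_nonneg_of_le
    (fun m ↦ mul_nonneg (ha m).1
      (neg_log_one_sub_nonneg (pow_nonneg hq0 _) (pow_lt_one₀ hq0 hq1 (by omega))))
    (fun m ↦ mul_neg_log_one_sub_pow_succ_le (ha m).1 (ha m).2 hq0 hq1)

lemma tsum_mul_neg_log_one_sub_pow_succ_le
    (ha : ∀ m : ℕ, 0 ≤ a m ∧ a m ≤ c * ((m : ℝ) + 1) ^ k) (hq0 : 0 ≤ q) (hq1 : q < 1) :
    ∑' m : ℕ, a m * -log (1 - q ^ (m + 1)) ≤ c * k ! * q / (1 - q) ^ (k + 2) := by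
  have h1q : 0 < 1 - q := by linarith
  calc ∑' m : ℕ, a m * -log (1 - q ^ (m + 1))
      ≤ ∑' m : ℕ, c * k ! * q / (1 - q) * ((m + k).choose k * q ^ m) :=
        (summable_mul_neg_log_one_sub_pow_succ ha hq0 hq1).tsum_le_tsum
          (fun m ↦ mul_neg_log_one_sub_pow_succ_le (ha m).1 (ha m).2 hq0 hq1)
          (summable_choose_mul_geometric_bound hq0 hq1)
    _ = c * k ! * q / (1 - q) ^ (k + 2) := by
        rw [tsum_mul_left, tsum_choose_mul_geometric_of_norm_lt_one k
          (by rwa [norm_of_nonneg hq0])]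
        field_simp
        ring

end PolynomialMultiplicity

lemma mul_exp_neg_le_one_sub_exp_neg (x : ℝ) : x * exp (-x) ≤ 1 - exp (-x) := by
  have h := mul_le_mul_of_nonneg_right (add_one_le_exp x) (exp_pos (-x)).le
  rw [← exp_add, add_neg_cancel, exp_zero] at h
  linarith

lemma exp_neg_div_one_sub_exp_neg_pow_le {γ : ℝ} (hγ : 0 < γ) {n : ℕ} (hn : 0 < n) :
    exp (-γ) / (1 - exp (-γ)) ^ n ≤ n ^ n / γ ^ n := by
  have hn' : (1 : ℝ) ≤ n := by exact_mod_cast hn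
  set x := γ / n with hx
  have hbase : x * exp (-x) ≤ 1 - exp (-γ) :=
    (mul_exp_neg_le_one_sub_exp_neg x).trans (by gcongr; exact div_le_self hγ.le hn')
  have hexp : exp (-x) ^ n = exp (-γ) := by
    rw [← exp_nat_mul, hx]; field_simp
  have h1 : 0 < 1 - exp (-γ) := by linarith [exp_lt_one_iff.2 (neg_lt_zero.2 hγ)]
  rw [div_le_div_iff₀ (by positivity) (by positivity)]
  calc exp (-γ) * γ ^ n = n ^ n * (x * exp (-x)) ^ n := by
        rw [mul_pow, hexp, hx, div_pow]; field_simp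
    _ ≤ n ^ n * (1 - exp (-γ)) ^ n := by gcongr

end Real

/-- Partition-function bound under cubic multiplicity growth: if `0 ≤ μ_m ≤ 2m³` for all
`m ≥ 1`, then for every `γ > 0` the series `∑_{m≥1} μ_m·(−log(1 − e^{−γm}))` converges
and is bounded by `12·e^{−γ}/(1 − e^{−γ})⁵ ≤ 12·5⁵/γ⁵`. -/
theorem partition_function_bound (μ : ℕ → ℝ)
    (hμ : ∀ m : ℕ, 1 ≤ m → 0 ≤ μ m ∧ μ m ≤ 2 * (m : ℝ) ^ 3) :
    ∀ γ > (0 : ℝ),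
      Summable (fun m : ℕ =>
        μ (m + 1) * (-Real.log (1 - Real.exp (-(γ * (m + 1)))))) ∧
      (∑' m : ℕ, μ (m + 1) * (-Real.log (1 - Real.exp (-(γ * (m + 1)))))) ≤
        12 * Real.exp (-γ) / (1 - Real.exp (-γ)) ^ 5 ∧
      12 * Real.exp (-γ) / (1 - Real.exp (-γ)) ^ 5 ≤ 12 * 5 ^ 5 / γ ^ 5 := by
  intro γ hγ
  have hq0 : 0 ≤ exp (-γ) := (exp_pos _).le
  have hq1 : exp (-γ) < 1 := exp_lt_one_iff.2 (neg_lt_zero.2 hγ)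
  have hexp (m : ℕ) : exp (-(γ * (m + 1))) = exp (-γ) ^ (m + 1) := by
    rw [← exp_nat_mul]; push_cast; ring_nf
  have hμ' (m : ℕ) : 0 ≤ μ (m + 1) ∧ μ (m + 1) ≤ 2 * ((m : ℝ) + 1) ^ 3 := by
    simpa using hμ (m + 1) (by omega)
  simp only [hexp]
  refine ⟨summable_mul_neg_log_one_sub_pow_succ hμ' hq0 hq1, ?_, ?_⟩
  · convert tsum_mul_neg_log_one_sub_pow_succ_le hμ' hq0 hq1 using 1
    norm_num [Nat.factorial]
  · have h := exp_neg_div_one_sub_exp_neg_pow_le hγ (n := 5) (by norm_num)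
    push_cast at h
    rw [mul_div_assoc, mul_div_assoc]
    exact mul_le_mul_of_nonneg_left h (by norm_num)
end
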